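/- For every odd n ≥ 3, the graph G_n with vertex set V_n = {v^0_0, v^0_1} ∪ {v^i_0, v^i_1, v^i_2, v^i_3 : 1 ≤ i ≤ n} and edge set E^0_n ∪ E^1_n (as defined in the context) admits no injective 4-colouring. -/

import Mathlib

/-- `c` is an injective colouring of `G`: any two distinct vertices sharing a
common neighbour receive different colours. -/
def IsInjColoring {V α : Type} (G : SimpleGraph V) (c : V → α) : Prop :=
  ∀ u v : V, u ≠ v → (∃ w, G.Adj u w ∧ G.Adj v w) → c u ≠ c v

/-- The injective chromatic number of `G`, as an extended natural number. -/
noncomputable def injChrom {V : Type} (G : SimpleGraph V) : ℕ∞ :=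
  ⨅ n ∈ {n : ℕ | ∃ c : V → Fin n, IsInjColoring G c}, (n : ℕ∞)

/-- Vertex type of the graph `G_n`: `Sum.inl 0 = v⁰₀`, `Sum.inl 1 = v⁰₁`, and
`Sum.inr (i, j) = vⁱ⁺¹ⱼ` for `0 ≤ i ≤ n − 1`, `0 ≤ j ≤ 3`. -/
def FamV (n : ℕ) : Type := Sum (Fin 2) (Fin n × Fin 4)

/-- The vertex `vⁱⱼ` of `G_n`, with the identifications `v⁰₂ = v⁰₃ = v⁰₁`. -/
def famVtx (n : ℕ) (i : Fin (n + 1)) (j : Fin 4) : FamV n :=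
  if h : i.val = 0 then (if j.val = 0 then Sum.inl 0 else Sum.inl 1)
  else Sum.inr (⟨i.val - 1, by have := i.isLt; omega⟩, j)

/-- One orientation of the edges `E⁰_n ∪ E¹_n` of `G_n` (indices mod `n+1`). -/
def famRel (n : ℕ) (x y : FamV n) : Prop :=
  (x = famVtx n 0 0 ∧ y = famVtx n 0 1) ∨
  (∃ i : Fin (n + 1), i ≠ 0 ∧
    ((x = famVtx n i 1 ∧ (y = famVtx n i 0 ∨ y = famVtx n i 2 ∨ y = famVtx n i 3)) ∨
     (x = famVtx n i 2 ∧ y = famVtx n i 3))) ∨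
  (∃ i : Fin (n + 1), x = famVtx n i 0 ∧ y = famVtx n (i + 1) 2) ∨
  (∃ i : Fin (n + 1), x = famVtx n i 3 ∧ y = famVtx n (i + 1) 0)

/-- The graph `G_n` with vertex set `V_n` and edge set `E⁰_n ∪ E¹_n`. -/
def famG (n : ℕ) : SimpleGraph (FamV n) where
  Adj x y := x ≠ y ∧ (famRel n x y ∨ famRel n y x)
  symm := by
    constructor
    rintro x y ⟨h1, h2⟩
    exact ⟨h1.symm, h2.symm⟩
  loopless := ⟨fun x h => h.1 rfl⟩

/-!
Write `aᵢ, bᵢ, xᵢ, yᵢ` for the colours of `vⁱ₀, vⁱ₁, vⁱ₂, vⁱ₃`, `1 ≤ i ≤ n`. With four colours,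
`aᵢ` is either `bᵢ` or the colour `dᵢ` missing from the triangle `vⁱ₁vⁱ₂vⁱ₃`, and the constraints
between consecutive gadgets force all gadgets to make the same choice.

If `aᵢ = dᵢ` throughout, the constraints on the colour of `v⁰₀` leave only the colour `x₁` when
compared with gadget `1`, and only `yₙ` when compared with gadget `n`; but `v¹₂` and `vⁿ₃` are both
neighbours of `v⁰₀`, so `x₁ ≠ yₙ`. If `aᵢ = bᵢ` throughout, the unordered pair `{xᵢ, yᵢ}` is the
same for all gadgets, and then either `x₁ = yₙ` again, or `v⁰₀` must avoid the four distinct colours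
`a₁, aₙ, x₁, y₁`.
-/

theorem eq_of_ne_of_card_le_four {α : Type*} [Fintype α]
    (hα : Fintype.card α ≤ 4) {p q r c e : α} (hpq : p ≠ q) (hpr : p ≠ r) (hqr : q ≠ r)
    (hcp : c ≠ p) (hcq : c ≠ q) (hcr : c ≠ r) (hep : e ≠ p) (heq : e ≠ q) (her : e ≠ r) :
    c = e := by
  classical
  by_contra hce
  have := Finset.card_le_univ ({p, q, r, c, e} : Finset α)
  rw [Finset.card_insert_of_notMem, Finset.card_insert_of_notMem, Finset.card_insert_of_notMem,
    Finset.card_pair hce] at this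
  · omega
  all_goals simp_all [eq_comm]

/-- The colours of the vertices `v₀, v₁, v₂, v₃` of one gadget of `G_n`. -/
structure GadgetColours (α : Type*) where
  a : α
  b : α
  x : α
  y : α

namespace GadgetColours

variable {α : Type*}

/-- The constraints of an injective colouring inside a gadget: `v₁v₂v₃` is a triangle, and
`v₀` shares the neighbour `v₁` with `v₂` and `v₃`. -/
structure Valid (g : GadgetColours α) : Prop where
  b_ne_x : g.b ≠ g.x
  b_ne_y : g.b ≠ g.y
  x_ne_y : g.x ≠ g.y
  a_ne_x : g.a ≠ g.x
  a_ne_y : g.a ≠ g.y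

/-- The constraints of an injective colouring between consecutive gadgets `g` and `g'`,
coming from the common neighbours `v₃`, `v₀` of `g` and `v₂'`, `v₀'` of `g'`. -/
structure Linked (g g' : GadgetColours α) : Prop where
  a'_ne_b : g'.a ≠ g.b
  a'_ne_x : g'.a ≠ g.x
  a_ne_b' : g.a ≠ g'.b
  a_ne_y' : g.a ≠ g'.y
  b_ne_x' : g.b ≠ g'.x
  b'_ne_y : g'.b ≠ g.y

variable [Fintype α] (hα : Fintype.card α ≤ 4)
include hα

theorem Linked.a_eq_b_iff {g g' : GadgetColours α} (hg : g.Valid) (hg' : g'.Valid)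
    (h : Linked g g') : g.a = g.b ↔ g'.a = g'.b := by
  constructor
  · intro hab
    have hy' : g.b ≠ g'.y := hab ▸ h.a_ne_y'
    have hb' : g.b ≠ g'.b := hab ▸ h.a_ne_b'
    exact eq_of_ne_of_card_le_four hα hg'.x_ne_y h.b_ne_x'.symm hy'.symm
      hg'.a_ne_x hg'.a_ne_y h.a'_ne_b hg'.b_ne_x hg'.b_ne_y hb'.symm
  · intro hab
    have hx : g'.b ≠ g.x := hab ▸ h.a'_ne_x
    have hb : g'.b ≠ g.b := hab ▸ h.a'_ne_b
    exact eq_of_ne_of_card_le_four hα hg.x_ne_y hx.symm h.b'_ne_y.symm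
      hg.a_ne_x hg.a_ne_y h.a_ne_b' hg.b_ne_x hg.b_ne_y hb.symm

theorem Linked.sym2_eq {g g' : GadgetColours α} (hg : g.Valid) (hg' : g'.Valid)
    (h : Linked g g') (hab : g.a = g.b) (hab' : g'.a = g'.b) :
    s(g'.x, g'.y) = s(g.x, g.y) := by
  have hbb' : g.b ≠ g'.b := (hab' ▸ h.a'_ne_b).symm
  have hb'x : g'.b ≠ g.x := hab' ▸ h.a'_ne_x
  have hby' : g.b ≠ g'.y := hab ▸ h.a_ne_y'
  have mem : ∀ z, z ≠ g.b → z ≠ g'.b → z = g.x ∨ z = g.y := fun z hzb hzb' =>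
    or_iff_not_imp_left.2 fun hzx => eq_of_ne_of_card_le_four hα hbb' hg.b_ne_x hb'x
      hzb hzb' hzx hg.b_ne_y.symm h.b'_ne_y.symm hg.x_ne_y.symm
  rw [Sym2.eq_iff]
  rcases mem _ h.b_ne_x'.symm hg'.b_ne_x.symm with hx | hx <;>
    rcases mem _ hby'.symm hg'.b_ne_y.symm with hy | hy
  · exact absurd (hx.trans hy.symm) hg'.x_ne_y
  · exact .inl ⟨hx, hy⟩
  · exact .inr ⟨hx, hy⟩
  · exact absurd (hx.trans hy.symm) hg'.x_ne_y

variable {m : ℕ} {g : Fin (m + 1) → GadgetColours α} (hg : ∀ i, (g i).Valid)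
  (hlink : ∀ i : Fin m, Linked (g i.castSucc) (g i.succ))
include hg hlink

theorem a_eq_b_iff_of_chain (i : Fin (m + 1)) : (g 0).a = (g 0).b ↔ (g i).a = (g i).b := by
  induction i using Fin.induction with
  | zero => rfl
  | succ i ih => exact ih.trans ((hlink i).a_eq_b_iff hα (hg _) (hg _))

theorem sym2_eq_of_chain (hab : (g 0).a = (g 0).b) (i : Fin (m + 1)) :
    s((g i).x, (g i).y) = s((g 0).x, (g 0).y) := by
  induction i using Fin.induction with
  | zero => rfl
  | succ i ih =>
    have hab_all := fun j => (a_eq_b_iff_of_chain hα hg hlink j).1 hab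
    exact ((hlink i).sym2_eq hα (hg _) (hg _) (hab_all _) (hab_all _)).trans ih

theorem false_of_chain {c₀ : α} (h₀a : c₀ ≠ (g 0).a) (h₀b : c₀ ≠ (g 0).b) (h₀y : c₀ ≠ (g 0).y)
    (hla : c₀ ≠ (g (Fin.last m)).a) (hlb : c₀ ≠ (g (Fin.last m)).b)
    (hlx : c₀ ≠ (g (Fin.last m)).x) (ha : (g 0).a ≠ (g (Fin.last m)).a)
    (hxy : (g 0).x ≠ (g (Fin.last m)).y) : False := by
  set g₀ := g 0
  set gₗ := g (Fin.last m)
  by_cases hab : g₀.a = g₀.b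
  · rcases Sym2.eq_iff.1 (sym2_eq_of_chain hα hg hlink hab (Fin.last m)) with ⟨hx, hy⟩ | ⟨-, hy⟩
    · have hay : gₗ.a ≠ g₀.y := hy ▸ (hg _).a_ne_y
      have hax : gₗ.a ≠ g₀.x := hx ▸ (hg _).a_ne_x
      exact hlx (hx ▸ eq_of_ne_of_card_le_four hα ha (hg 0).a_ne_y hay
        h₀a hla h₀y (hg 0).a_ne_x.symm hax.symm (hg 0).x_ne_y)
    · exact hxy hy.symm
  · have habₗ : gₗ.a ≠ gₗ.b := mt (a_eq_b_iff_of_chain hα hg hlink _).2 hab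
    have h₀x : c₀ = g₀.x := eq_of_ne_of_card_le_four hα hab (hg 0).a_ne_y (hg 0).b_ne_y
      h₀a h₀b h₀y (hg 0).a_ne_x.symm (hg 0).b_ne_x.symm (hg 0).x_ne_y
    have hₗy : c₀ = gₗ.y := eq_of_ne_of_card_le_four hα habₗ (hg _).a_ne_x (hg _).b_ne_x
      hla hlb hlx (hg _).a_ne_y.symm (hg _).b_ne_y.symm (hg _).x_ne_y.symm
    exact hxy (h₀x.symm.trans hₗy)

end GadgetColours

theorem IsInjColoring.ne_of_adj {V α : Type} {G : SimpleGraph V} {c : V → α}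
    (hc : IsInjColoring G c) {u v w : V} (hu : G.Adj u w) (hv : G.Adj v w) (huv : u ≠ v) :
    c u ≠ c v :=
  hc u v huv ⟨w, hu, hv⟩

section famG

variable {n : ℕ}

theorem famVtx_succ (i : Fin n) (j : Fin 4) : famVtx n i.succ j = .inr (i, j) :=
  dif_neg (Nat.succ_ne_zero _)

theorem famVtx_zero_zero : famVtx n 0 0 = .inl 0 :=
  (dif_pos (Fin.val_zero _)).trans (if_pos rfl)

theorem famVtx_zero_of_ne_zero {j : Fin 4} (hj : j ≠ 0) : famVtx n 0 j = .inl 1 :=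
  (dif_pos (Fin.val_zero _)).trans (if_neg (Fin.val_ne_iff.2 hj))

theorem famV_inr_ne_of_fst_ne {i i' : Fin n} (h : i ≠ i') (j j' : Fin 4) :
    (.inr (i, j) : FamV n) ≠ .inr (i', j') :=
  Sum.inr_injective.ne (mt (congrArg Prod.fst) h)

theorem famV_inr_ne_of_snd_ne {i i' : Fin n} {j j' : Fin 4} (h : j ≠ j') :
    (.inr (i, j) : FamV n) ≠ .inr (i', j') :=
  Sum.inr_injective.ne (mt (congrArg Prod.snd) h)

theorem famG_adj_of_famRel {x y : FamV n} (hxy : x ≠ y) (h : famRel n x y) : (famG n).Adj x y :=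
  ⟨hxy, Or.inl h⟩

theorem famG_adj_inr_one_zero (i : Fin n) : (famG n).Adj (.inr (i, 1)) (.inr (i, 0)) :=
  famG_adj_of_famRel (famV_inr_ne_of_snd_ne (by decide)) <| Or.inr <| Or.inl
    ⟨i.succ, i.succ_ne_zero, .inl ⟨(famVtx_succ i 1).symm, .inl (famVtx_succ i 0).symm⟩⟩

theorem famG_adj_inr_one_two (i : Fin n) : (famG n).Adj (.inr (i, 1)) (.inr (i, 2)) :=
  famG_adj_of_famRel (famV_inr_ne_of_snd_ne (by decide)) <| Or.inr <| Or.inl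
    ⟨i.succ, i.succ_ne_zero, .inl ⟨(famVtx_succ i 1).symm, .inr (.inl (famVtx_succ i 2).symm)⟩⟩

theorem famG_adj_inr_one_three (i : Fin n) : (famG n).Adj (.inr (i, 1)) (.inr (i, 3)) :=
  famG_adj_of_famRel (famV_inr_ne_of_snd_ne (by decide)) <| Or.inr <| Or.inl
    ⟨i.succ, i.succ_ne_zero, .inl ⟨(famVtx_succ i 1).symm, .inr (.inr (famVtx_succ i 3).symm)⟩⟩

theorem famG_adj_inr_two_three (i : Fin n) : (famG n).Adj (.inr (i, 2)) (.inr (i, 3)) :=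
  famG_adj_of_famRel (famV_inr_ne_of_snd_ne (by decide)) <| Or.inr <| Or.inl
    ⟨i.succ, i.succ_ne_zero, .inr ⟨(famVtx_succ i 2).symm, (famVtx_succ i 3).symm⟩⟩

end famG

section famG_succ

variable {m : ℕ}

theorem famG_adj_inr_castSucc_zero_succ_two (i : Fin m) :
    (famG (m + 1)).Adj (.inr (i.castSucc, 0)) (.inr (i.succ, 2)) := by
  refine famG_adj_of_famRel (famV_inr_ne_of_fst_ne i.castSucc_lt_succ.ne _ _)
    (Or.inr (Or.inr (Or.inl ⟨i.castSucc.succ, (famVtx_succ _ _).symm, ?_⟩)))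
  rw [Fin.succ_castSucc, Fin.coeSucc_eq_succ, famVtx_succ]

theorem famG_adj_inr_castSucc_three_succ_zero (i : Fin m) :
    (famG (m + 1)).Adj (.inr (i.castSucc, 3)) (.inr (i.succ, 0)) := by
  refine famG_adj_of_famRel (famV_inr_ne_of_fst_ne i.castSucc_lt_succ.ne _ _)
    (Or.inr (Or.inr (Or.inr ⟨i.castSucc.succ, (famVtx_succ _ _).symm, ?_⟩)))
  rw [Fin.succ_castSucc, Fin.coeSucc_eq_succ, famVtx_succ]

theorem famG_adj_inl_zero_inl_one : (famG (m + 1)).Adj (.inl 0) (.inl 1) :=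
  famG_adj_of_famRel (Sum.inl_injective.ne (by decide))
    (Or.inl ⟨famVtx_zero_zero.symm, (famVtx_zero_of_ne_zero (by decide)).symm⟩)

theorem famG_adj_inl_zero_inr_zero_two : (famG (m + 1)).Adj (.inl 0) (.inr (0, 2)) := by
  refine famG_adj_of_famRel Sum.inl_ne_inr
    (Or.inr (Or.inr (Or.inl ⟨0, famVtx_zero_zero.symm, ?_⟩)))
  rw [zero_add, ← Fin.succ_zero_eq_one, famVtx_succ]

theorem famG_adj_inl_one_inr_zero_zero : (famG (m + 1)).Adj (.inl 1) (.inr (0, 0)) := by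
  refine famG_adj_of_famRel Sum.inl_ne_inr
    (Or.inr (Or.inr (Or.inr ⟨0, (famVtx_zero_of_ne_zero (by decide)).symm, ?_⟩)))
  rw [zero_add, ← Fin.succ_zero_eq_one, famVtx_succ]

theorem famG_adj_inr_last_zero_inl_one : (famG (m + 1)).Adj (.inr (Fin.last m, 0)) (.inl 1) := by
  refine famG_adj_of_famRel Sum.inr_ne_inl
    (Or.inr (Or.inr (Or.inl ⟨Fin.last (m + 1), ?_, ?_⟩)))
  · rw [← Fin.succ_last, famVtx_succ]
  · rw [Fin.last_add_one, famVtx_zero_of_ne_zero (by decide)]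

theorem famG_adj_inr_last_three_inl_zero : (famG (m + 1)).Adj (.inr (Fin.last m, 3)) (.inl 0) := by
  refine famG_adj_of_famRel Sum.inr_ne_inl
    (Or.inr (Or.inr (Or.inr ⟨Fin.last (m + 1), ?_, ?_⟩)))
  · rw [← Fin.succ_last, famVtx_succ]
  · rw [Fin.last_add_one, famVtx_zero_zero]

end famG_succ

/-- The colours of the gadget `vⁱ⁺¹₀, vⁱ⁺¹₁, vⁱ⁺¹₂, vⁱ⁺¹₃` of `G_n` under `c`. -/
def famGadgetColours {n : ℕ} {α : Type} (c : FamV n → α) (i : Fin n) : GadgetColours α :=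
  ⟨c (.inr (i, 0)), c (.inr (i, 1)), c (.inr (i, 2)), c (.inr (i, 3))⟩

namespace IsInjColoring

variable {α : Type}

theorem famGadgetColours_valid {n : ℕ} {c : FamV n → α} (hc : IsInjColoring (famG n) c)
    (i : Fin n) : (famGadgetColours c i).Valid where
  b_ne_x := hc.ne_of_adj (famG_adj_inr_one_three i) (famG_adj_inr_two_three i)
    (famV_inr_ne_of_snd_ne (by decide))
  b_ne_y := hc.ne_of_adj (famG_adj_inr_one_two i) (famG_adj_inr_two_three i).symm
    (famV_inr_ne_of_snd_ne (by decide))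
  x_ne_y := hc.ne_of_adj (famG_adj_inr_one_two i).symm (famG_adj_inr_one_three i).symm
    (famV_inr_ne_of_snd_ne (by decide))
  a_ne_x := hc.ne_of_adj (famG_adj_inr_one_zero i).symm (famG_adj_inr_one_two i).symm
    (famV_inr_ne_of_snd_ne (by decide))
  a_ne_y := hc.ne_of_adj (famG_adj_inr_one_zero i).symm (famG_adj_inr_one_three i).symm
    (famV_inr_ne_of_snd_ne (by decide))

theorem famGadgetColours_linked {m : ℕ} {c : FamV (m + 1) → α}
    (hc : IsInjColoring (famG (m + 1)) c) (i : Fin m) :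
    (famGadgetColours c i.castSucc).Linked (famGadgetColours c i.succ) where
  a'_ne_b := hc.ne_of_adj (famG_adj_inr_castSucc_three_succ_zero i).symm (famG_adj_inr_one_three _)
    (famV_inr_ne_of_fst_ne i.castSucc_lt_succ.ne' _ _)
  a'_ne_x := hc.ne_of_adj (famG_adj_inr_castSucc_three_succ_zero i).symm (famG_adj_inr_two_three _)
    (famV_inr_ne_of_fst_ne i.castSucc_lt_succ.ne' _ _)
  a_ne_b' := hc.ne_of_adj (famG_adj_inr_castSucc_zero_succ_two i) (famG_adj_inr_one_two _)
    (famV_inr_ne_of_fst_ne i.castSucc_lt_succ.ne _ _)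
  a_ne_y' := hc.ne_of_adj (famG_adj_inr_castSucc_zero_succ_two i) (famG_adj_inr_two_three _).symm
    (famV_inr_ne_of_fst_ne i.castSucc_lt_succ.ne _ _)
  b_ne_x' := hc.ne_of_adj (famG_adj_inr_one_zero _) (famG_adj_inr_castSucc_zero_succ_two i).symm
    (famV_inr_ne_of_fst_ne i.castSucc_lt_succ.ne _ _)
  b'_ne_y := hc.ne_of_adj (famG_adj_inr_one_zero _) (famG_adj_inr_castSucc_three_succ_zero i)
    (famV_inr_ne_of_fst_ne i.castSucc_lt_succ.ne' _ _)

end IsInjColoring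

theorem famG_no_inj_four_coloring_general (n : ℕ) (hn : 3 ≤ n) :
    ¬ ∃ c : FamV n → Fin 4, IsInjColoring (famG n) c := by
  obtain ⟨m, rfl⟩ : ∃ m, n = m + 1 := ⟨n - 1, by omega⟩
  rintro ⟨c, hc⟩
  have hm : (0 : Fin (m + 1)) ≠ Fin.last m := by simp [Fin.ext_iff]; omega
  exact GadgetColours.false_of_chain (Fintype.card_fin 4).le hc.famGadgetColours_valid
    hc.famGadgetColours_linked (c₀ := c (.inl 0))
    (hc.ne_of_adj famG_adj_inl_zero_inl_one famG_adj_inl_one_inr_zero_zero.symm Sum.inl_ne_inr)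
    (hc.ne_of_adj famG_adj_inl_zero_inr_zero_two (famG_adj_inr_one_two 0) Sum.inl_ne_inr)
    (hc.ne_of_adj famG_adj_inl_zero_inr_zero_two (famG_adj_inr_two_three 0).symm Sum.inl_ne_inr)
    (hc.ne_of_adj famG_adj_inl_zero_inl_one famG_adj_inr_last_zero_inl_one Sum.inl_ne_inr)
    (hc.ne_of_adj famG_adj_inr_last_three_inl_zero.symm (famG_adj_inr_one_three _) Sum.inl_ne_inr)
    (hc.ne_of_adj famG_adj_inr_last_three_inl_zero.symm (famG_adj_inr_two_three _) Sum.inl_ne_inr)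
    (hc.ne_of_adj famG_adj_inl_one_inr_zero_zero.symm famG_adj_inr_last_zero_inl_one
      (famV_inr_ne_of_fst_ne hm _ _))
    (hc.ne_of_adj famG_adj_inl_zero_inr_zero_two.symm famG_adj_inr_last_three_inl_zero
      (famV_inr_ne_of_snd_ne (by decide)))

/-- For every odd `n ≥ 3`, the graph `G_n` admits no injective 4-colouring. -/
theorem famG_no_inj_four_coloring (n : ℕ) (hn : 3 ≤ n) (hodd : Odd n) :
    ¬ ∃ c : FamV n → Fin 4, IsInjColoring (famG n) c :=
  famG_no_inj_four_coloring_general n hn
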